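/- arXiv:2107.09243 — 5 statements merged into one kernel-verified Lean document; each statement's English description precedes it below -/
import Mathlib

section
/- For all g∈ℝ and h≥0, one has tanh(g+h) − tanh(g−h) ≤ 2·tanh(h), with strict inequality whenever g≠0 and h>0. -/
/-- For all `g ∈ ℝ` and `h ≥ 0`, `tanh(g+h) − tanh(g−h) ≤ 2 tanh h`, with strict inequality
whenever `g ≠ 0` and `h > 0`. -/
theorem tanh_diff_le_two_tanh (g h : ℝ) (hh : 0 ≤ h) :
    Real.tanh (g + h) - Real.tanh (g - h) ≤ 2 * Real.tanh h ∧
      (g ≠ 0 → 0 < h → Real.tanh (g + h) - Real.tanh (g - h) < 2 * Real.tanh h) := by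
  have c1 : 0 < Real.cosh (g + h) := Real.cosh_pos _
  have c2 : 0 < Real.cosh (g - h) := Real.cosh_pos _
  have ch : 0 < Real.cosh h := Real.cosh_pos _
  have hprod : Real.cosh (g + h) * Real.cosh (g - h)
      = Real.cosh h ^ 2 + Real.sinh g ^ 2 := by
    rw [Real.cosh_add, Real.cosh_sub]
    nlinarith [Real.cosh_sq g, Real.cosh_sq h]
  have hdiff : Real.tanh (g + h) - Real.tanh (g - h)
      = 2 * Real.sinh h * Real.cosh h / (Real.cosh h ^ 2 + Real.sinh g ^ 2) := by
    rw [Real.tanh_eq_sinh_div_cosh, Real.tanh_eq_sinh_div_cosh,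
      div_sub_div _ _ c1.ne' c2.ne', hprod]
    congr 1
    rw [← Real.sinh_sub, show g + h - (g - h) = 2 * h by ring, two_mul, Real.sinh_add]
    ring
  have h2t : 2 * Real.tanh h = 2 * Real.sinh h * Real.cosh h / Real.cosh h ^ 2 := by
    rw [Real.tanh_eq_sinh_div_cosh]
    field_simp
  have hnum : 0 ≤ 2 * Real.sinh h * Real.cosh h := by
    have : 0 ≤ Real.sinh h := by simpa using Real.sinh_le_sinh.mpr hh
    positivity
  have hden : Real.cosh h ^ 2 ≤ Real.cosh h ^ 2 + Real.sinh g ^ 2 := by nlinarith [sq_nonneg (Real.sinh g)]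
  constructor
  · rw [hdiff, h2t]
    gcongr
  · intro hg hpos
    rw [hdiff, h2t]
    have hs : 0 < Real.sinh g ^ 2 := by
      have : Real.sinh g ≠ 0 := fun hc => hg (by simpa using Real.sinh_eq_zero.mp hc)
      positivity
    have hnum' : 0 < 2 * Real.sinh h * Real.cosh h := by
      have : 0 < Real.sinh h := by simpa using Real.sinh_lt_sinh.mpr hpos
      positivity
    exact div_lt_div_of_pos_left hnum' (by positivity) (by nlinarith)
end

section
/- Let G=(V,E) be a finite graph with coupling constants J:E→[0,∞), external field g:V→ℝ, and a vertex v∈V with g_v≥0. Let g^{(0)}:V→ℝ agree with g except that g^{(0)}_v=0, and set α = (1 − tanh(g_v)) / (1 + ⟨σ_v⟩_{g^{(0)}}·tanh(g_v)). Then α∈[0,1], the marginal law of σ_v under μ_g is the mixture with weights α and 1−α of its laws under μ_{g^{(0)}} and under conditioning on σ_v=1, and for every o∈V, ⟨σ_o⟩_g = α·⟨σ_o⟩_{g^{(0)}} + (1−α)·⟨σ_o | σ_v=1⟩_g. -/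
open Finset

/-- The value ±1 of an Ising spin encoded by a Boolean. -/
noncomputable def spinval (b : Bool) : ℝ := if b then 1 else -1

/-- The (unnormalized) Gibbs weight of a spin configuration `σ` for the Ising model on a
finite vertex set `V` with symmetric coupling constants `J` and external field `f`:
`exp(Σ_{u~v} J_{uv} σ_u σ_v + Σ_u f_u σ_u)`, where the edge sum is written as half the
double sum over ordered pairs. -/
noncomputable def isingWeight {V : Type*} [Fintype V] [DecidableEq V]
    (J : V → V → ℝ) (f : V → ℝ) (σ : V → Bool) : ℝ :=
  Real.exp ((∑ u : V, ∑ v : V, J u v * spinval (σ u) * spinval (σ v)) / 2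
    + ∑ u : V, f u * spinval (σ u))

/-- Expectation `⟨X⟩_f` under the Ising Gibbs measure `μ_f`. -/
noncomputable def isingExp {V : Type*} [Fintype V] [DecidableEq V]
    (J : V → V → ℝ) (f : V → ℝ) (X : (V → Bool) → ℝ) : ℝ :=
  (∑ σ : V → Bool, X σ * isingWeight J f σ) / ∑ σ : V → Bool, isingWeight J f σ

open scoped Classical in
/-- Conditional expectation `⟨X | E⟩_f` under the Ising Gibbs measure `μ_f`,
conditioned on the event `E`. -/
noncomputable def isingCondExp {V : Type*} [Fintype V] [DecidableEq V]
    (J : V → V → ℝ) (f : V → ℝ) (E : (V → Bool) → Prop) (X : (V → Bool) → ℝ) : ℝ :=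
  (∑ σ ∈ Finset.univ.filter (fun σ => E σ), X σ * isingWeight J f σ) /
    ∑ σ ∈ Finset.univ.filter (fun σ => E σ), isingWeight J f σ

open scoped Classical in
/-- Probability `μ_f(E)` of an event `E` under the Ising Gibbs measure `μ_f`. -/
noncomputable def isingProb {V : Type*} [Fintype V] [DecidableEq V]
    (J : V → V → ℝ) (f : V → ℝ) (E : (V → Bool) → Prop) : ℝ :=
  (∑ σ ∈ Finset.univ.filter (fun σ => E σ), isingWeight J f σ) /
    ∑ σ : V → Bool, isingWeight J f σ

/-!
For a spin `s = ±1`, `exp (h s) = cosh h * ((1 - tanh h) + 2 tanh h * 1[s = +1])`. Hence the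
Gibbs weight at field `g` is, up to the factor `cosh (g v)`, the weight at `g⁰` times
`(1 - t) + 2t * 1[σ_v = +1]` with `t = tanh (g v)`. Averaging against it gives the convex
combination of `⟨·⟩_{g⁰}` and `⟨· | σ_v = 1⟩_{g⁰}` with weights proportional to `1 - t` and
`2t μ_{g⁰}(σ_v = 1)`; the normalisation is `1 - t + 2t μ_{g⁰}(σ_v = 1) = 1 + t ⟨σ_v⟩_{g⁰}`.
Conditioning on `σ_v = 1` also forgets the field at `v`, so the conditional expectation may be
taken at `g`. The marginal law of `σ_v` is the case `X = 1[σ_v = b]`.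
-/

section

variable {V : Type*} [Fintype V] [DecidableEq V] (J : V → V → ℝ)

lemma isingWeight_eq_update_zero_mul (g : V → ℝ) (v : V) (σ : V → Bool) :
    isingWeight J g σ
      = isingWeight J (Function.update g v 0) σ * Real.exp (g v * spinval (σ v)) := by
  have hsplit (u : V) : g u * spinval (σ u)
      = Function.update g v 0 u * spinval (σ u) + if u = v then g v * spinval (σ v) else 0 := by
    by_cases hu : u = v
    · subst hu; simp
    · simp [hu]
  rw [isingWeight, isingWeight, ← Real.exp_add, sum_congr rfl fun u _ => hsplit u,
    sum_add_distrib, sum_ite_eq', if_pos (mem_univ v), add_assoc]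

lemma exp_mul_spinval (h : ℝ) (b : Bool) :
    Real.exp (h * spinval b)
      = Real.cosh h * (1 - Real.tanh h + 2 * Real.tanh h * if b then 1 else 0) := by
  rw [Real.tanh_eq_sinh_div_cosh]
  cases b
  · simp only [spinval, Bool.false_eq_true, if_false, mul_neg_one, mul_zero, add_zero]
    rw [← Real.cosh_sub_sinh]
    field_simp
  · simp only [spinval, if_true, mul_one]
    rw [← Real.cosh_add_sinh]
    field_simp
    ring

lemma sum_isingWeight_pos (f : V → ℝ) (s : Finset (V → Bool)) (hs : s.Nonempty) :
    0 < ∑ σ ∈ s, isingWeight J f σ :=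
  sum_pos (fun _ _ => Real.exp_pos _) hs

lemma sum_mul_isingWeight_eq (g : V → ℝ) (v : V) (X : (V → Bool) → ℝ) :
    ∑ σ, X σ * isingWeight J g σ
      = Real.cosh (g v) *
        ((1 - Real.tanh (g v)) * ∑ σ, X σ * isingWeight J (Function.update g v 0) σ
          + 2 * Real.tanh (g v) *
            ∑ σ, if σ v then X σ * isingWeight J (Function.update g v 0) σ else 0) := by
  simp only [isingWeight_eq_update_zero_mul J g v, exp_mul_spinval, mul_sum, ← sum_add_distrib]
  refine sum_congr rfl fun σ _ => ?_
  split_ifs <;> ring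

lemma isingCondExp_spin_true_eq_div (f : V → ℝ) (v : V) (X : (V → Bool) → ℝ) :
    isingCondExp J f (fun σ => σ v = true) X
      = (∑ σ, if σ v then X σ * isingWeight J f σ else 0)
        / ∑ σ, if σ v then isingWeight J f σ else 0 := by
  rw [isingCondExp, sum_filter, sum_filter]
  congr!

lemma isingProb_spin_true_eq_div (f : V → ℝ) (v : V) :
    isingProb J f (fun σ => σ v = true)
      = (∑ σ, if σ v then isingWeight J f σ else 0) / ∑ σ, isingWeight J f σ := by
  rw [isingProb, sum_filter]
  congr!

open scoped Classical in
lemma isingProb_eq_isingExp (f : V → ℝ) (E : (V → Bool) → Prop) :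
    isingProb J f E = isingExp J f (fun σ => if E σ then 1 else 0) := by
  simp only [isingProb, isingExp, sum_filter, ite_mul, one_mul, zero_mul]

lemma isingProb_nonneg (f : V → ℝ) (E : (V → Bool) → Prop) : 0 ≤ isingProb J f E :=
  div_nonneg (sum_nonneg fun _ _ => (Real.exp_pos _).le)
    (sum_isingWeight_pos J f _ univ_nonempty).le

lemma isingProb_le_one (f : V → ℝ) (E : (V → Bool) → Prop) : isingProb J f E ≤ 1 := by
  classical
  exact div_le_one_of_le₀ (sum_le_sum_of_subset_of_nonneg (filter_subset _ _)
    fun _ _ _ => (Real.exp_pos _).le) (sum_isingWeight_pos J f _ univ_nonempty).le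

lemma isingCondExp_eq_of_forall_eq (f : V → ℝ) (E : (V → Bool) → Prop) (X : (V → Bool) → ℝ)
    (x : ℝ) (hE : ∃ σ, E σ) (hX : ∀ σ, E σ → X σ = x) : isingCondExp J f E X = x := by
  classical
  obtain ⟨σ₀, hσ₀⟩ := hE
  have hpos := sum_isingWeight_pos J f (univ.filter E) ⟨σ₀, mem_filter.2 ⟨mem_univ _, hσ₀⟩⟩
  rw [isingCondExp, sum_congr rfl fun σ hσ => by rw [hX σ (mem_filter.1 hσ).2], ← mul_sum]
  convert mul_div_cancel_right₀ x hpos.ne'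

lemma isingCondExp_congr_of_isingWeight_eq_mul (f f' : V → ℝ) (E : (V → Bool) → Prop)
    (X : (V → Bool) → ℝ) (c : ℝ) (hc : c ≠ 0)
    (hweight : ∀ σ, E σ → isingWeight J f σ = isingWeight J f' σ * c) :
    isingCondExp J f E X = isingCondExp J f' E X := by
  classical
  unfold isingCondExp
  have hnum : ∑ σ ∈ univ.filter E, X σ * isingWeight J f σ
      = (∑ σ ∈ univ.filter E, X σ * isingWeight J f' σ) * c := by
    rw [sum_mul]
    exact sum_congr rfl fun σ hσ => by rw [hweight σ (mem_filter.1 hσ).2, mul_assoc]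
  rw [hnum, sum_congr rfl fun σ hσ => hweight σ (mem_filter.1 hσ).2, ← sum_mul,
    mul_div_mul_right _ _ hc]

lemma isingCondExp_update_zero (g : V → ℝ) (v : V) (b : Bool) (X : (V → Bool) → ℝ) :
    isingCondExp J g (fun σ => σ v = b) X
      = isingCondExp J (Function.update g v 0) (fun σ => σ v = b) X :=
  isingCondExp_congr_of_isingWeight_eq_mul J _ _ _ X _ (Real.exp_pos (g v * spinval b)).ne'
    fun σ hσ => by rw [isingWeight_eq_update_zero_mul J g v, hσ]

lemma isingExp_spinval (f : V → ℝ) (v : V) :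
    isingExp J f (fun σ => spinval (σ v)) = 2 * isingProb J f (fun σ => σ v = true) - 1 := by
  have hZ := sum_isingWeight_pos J f univ univ_nonempty
  have hspin : ∀ σ : V → Bool, spinval (σ v) * isingWeight J f σ
      = 2 * (if σ v then isingWeight J f σ else 0) - isingWeight J f σ := fun σ => by
    cases σ v
    · simp [spinval]
    · simp [spinval]; ring
  rw [isingExp, isingProb_spin_true_eq_div, sum_congr rfl fun σ _ => hspin σ, sum_sub_distrib, ← mul_sum]
  field_simp

lemma one_sub_tanh_add_two_tanh_mul_pos (h p : ℝ) (hp0 : 0 ≤ p) (hp1 : p ≤ 1) :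
    0 < 1 - Real.tanh h + 2 * Real.tanh h * p := by
  rcases le_total 0 (Real.tanh h) with ht | ht
  · nlinarith [mul_nonneg ht hp0, Real.tanh_lt_one h]
  · nlinarith [mul_nonneg (neg_nonneg.2 ht) (sub_nonneg.2 hp1), Real.neg_one_lt_tanh h]

lemma isingExp_mixture_update_zero (g : V → ℝ) (v : V) (X : (V → Bool) → ℝ) :
    (1 - Real.tanh (g v)
        + 2 * Real.tanh (g v) * isingProb J (Function.update g v 0) (fun σ => σ v = true))
      * isingExp J g X
    = (1 - Real.tanh (g v)) * isingExp J (Function.update g v 0) X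
      + 2 * Real.tanh (g v) * isingProb J (Function.update g v 0) (fun σ => σ v = true)
        * isingCondExp J (Function.update g v 0) (fun σ => σ v = true) X := by
  have hZ := sum_mul_isingWeight_eq J g v fun _ => 1
  simp only [one_mul] at hZ
  have hZpos := sum_isingWeight_pos J g univ univ_nonempty
  have hZ0pos := sum_isingWeight_pos J (Function.update g v 0) univ univ_nonempty
  have hZ0ppos : 0 < ∑ σ : V → Bool, if σ v then isingWeight J (Function.update g v 0) σ else 0 := by
    rw [← sum_filter]
    exact sum_isingWeight_pos J _ _ ⟨fun _ => true, by simp⟩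
  rw [isingExp, isingExp, isingProb_spin_true_eq_div, isingCondExp_spin_true_eq_div, sum_mul_isingWeight_eq J g v X,
    hZ, mul_div_mul_left _ _ (Real.cosh_pos _).ne']
  rw [hZ, mul_pos_iff_of_pos_left (Real.cosh_pos _)] at hZpos
  generalize Real.tanh (g v) = t at *
  generalize ∑ σ : V → Bool, isingWeight J (Function.update g v 0) σ = Z at *
  generalize (∑ σ : V → Bool, if σ v then isingWeight J (Function.update g v 0) σ else 0) = Zp at *
  have hmix : 1 - t + 2 * t * (Zp / Z) = ((1 - t) * Z + 2 * t * Zp) / Z := by field_simp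
  rw [hmix, div_mul_div_comm, mul_comm Z, ← div_div, mul_div_cancel_left₀ _ hZpos.ne']
  field_simp

lemma isingExp_eq_mixture (g : V → ℝ) (v : V) (X : (V → Bool) → ℝ) :
    isingExp J g X
      = (1 - Real.tanh (g v)) / (1 - Real.tanh (g v) + 2 * Real.tanh (g v)
          * isingProb J (Function.update g v 0) (fun σ => σ v = true))
          * isingExp J (Function.update g v 0) X
        + (1 - (1 - Real.tanh (g v)) / (1 - Real.tanh (g v) + 2 * Real.tanh (g v)
          * isingProb J (Function.update g v 0) (fun σ => σ v = true)))
          * isingCondExp J g (fun σ => σ v = true) X := by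
  set t := Real.tanh (g v) with ht
  set p := isingProb J (Function.update g v 0) (fun σ => σ v = true) with hp
  have hD : 0 < 1 - t + 2 * t * p :=
    one_sub_tanh_add_two_tanh_mul_pos _ _ (isingProb_nonneg _ _ _) (isingProb_le_one _ _ _)
  have hweight : 1 - (1 - t) / (1 - t + 2 * t * p) = 2 * t * p / (1 - t + 2 * t * p) := by
    rw [one_sub_div hD.ne']
    ring_nf
  apply mul_left_cancel₀ hD.ne'
  rw [isingExp_mixture_update_zero, ← ht, ← hp, isingCondExp_update_zero J g v, hweight,
    mul_add, ← mul_assoc, ← mul_assoc, mul_div_cancel₀ _ hD.ne', mul_div_cancel₀ _ hD.ne']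

end

theorem mixture_decomposition_of_field_at_vertex_general
    {V : Type*} [Fintype V] [DecidableEq V]
    (J : V → V → ℝ)
    (g : V → ℝ) (v : V) (hgv : 0 ≤ g v) (α : ℝ)
    (hα : α = (1 - Real.tanh (g v)) /
      (1 + isingExp J (Function.update g v 0) (fun σ => spinval (σ v)) * Real.tanh (g v))) :
    0 ≤ α ∧ α ≤ 1 ∧
      (∀ b : Bool, isingProb J g (fun σ => σ v = b)
        = α * isingProb J (Function.update g v 0) (fun σ => σ v = b)
          + (1 - α) * (if b then 1 else 0)) ∧
      (∀ o : V, isingExp J g (fun σ => spinval (σ o))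
        = α * isingExp J (Function.update g v 0) (fun σ => spinval (σ o))
          + (1 - α) * isingCondExp J g (fun σ => σ v = true) (fun σ => spinval (σ o))) := by
  have ht : 0 ≤ Real.tanh (g v) := by
    rw [Real.tanh_eq_sinh_div_cosh]
    exact div_nonneg (Real.sinh_nonneg_iff.2 hgv) (Real.cosh_pos _).le
  set t := Real.tanh (g v)
  set p := isingProb J (Function.update g v 0) (fun σ => σ v = true) with hp_def
  have hp : 0 ≤ p := isingProb_nonneg _ _ _
  have hD : 0 < 1 - t + 2 * t * p :=
    one_sub_tanh_add_two_tanh_mul_pos _ _ hp (isingProb_le_one _ _ _)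
  have hα' : α = (1 - t) / (1 - t + 2 * t * p) := by
    rw [hα, isingExp_spinval, ← hp_def]
    ring_nf
  have hmix : ∀ X, isingExp J g X = α * isingExp J (Function.update g v 0) X
      + (1 - α) * isingCondExp J g (fun σ => σ v = true) X := fun X => by
    rw [hα']
    exact isingExp_eq_mixture J g v X
  refine ⟨hα' ▸ div_nonneg (by linarith [Real.tanh_lt_one (g v)]) hD.le, ?_,
    fun b => ?_, fun o => hmix _⟩
  · rw [hα', div_le_one hD]
    nlinarith
  · rw [isingProb_eq_isingExp, isingProb_eq_isingExp, hmix,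
      isingCondExp_eq_of_forall_eq J g (fun σ => σ v = true) _ (if b then 1 else 0)
        ⟨fun _ => true, rfl⟩ fun σ hσ => by cases b <;> simp [hσ]]

/-- **Mixture decomposition (eqs. (2.9)–(2.10)).** Let `v` have field value `g_v ≥ 0`, let
`g⁰` agree with `g` except `g⁰_v = 0`, and set
`α = (1 − tanh g_v)/(1 + ⟨σ_v⟩_{g⁰} tanh g_v)`. Then `α ∈ [0,1]`; the marginal law of `σ_v`
under `μ_g` is the `(α, 1−α)`-mixture of its law under `μ_{g⁰}` and the point mass at `+1`
(its law conditioned on `σ_v = 1`); and for every vertex `o`,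
`⟨σ_o⟩_g = α ⟨σ_o⟩_{g⁰} + (1−α) ⟨σ_o | σ_v = 1⟩_g`. -/
theorem mixture_decomposition_of_field_at_vertex
    {V : Type*} [Fintype V] [DecidableEq V]
    (J : V → V → ℝ) (hJsymm : ∀ u v, J u v = J v u) (hJnonneg : ∀ u v, 0 ≤ J u v)
    (g : V → ℝ) (v : V) (hgv : 0 ≤ g v) (α : ℝ)
    (hα : α = (1 - Real.tanh (g v)) /
      (1 + isingExp J (Function.update g v 0) (fun σ => spinval (σ v)) * Real.tanh (g v))) :
    0 ≤ α ∧ α ≤ 1 ∧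
      (∀ b : Bool, isingProb J g (fun σ => σ v = b)
        = α * isingProb J (Function.update g v 0) (fun σ => σ v = b)
          + (1 - α) * (if b then 1 else 0)) ∧
      (∀ o : V, isingExp J g (fun σ => spinval (σ o))
        = α * isingExp J (Function.update g v 0) (fun σ => spinval (σ o))
          + (1 - α) * isingCondExp J g (fun σ => σ v = true) (fun σ => spinval (σ o))) :=
  mixture_decomposition_of_field_at_vertex_general J g v hgv α hα
end

section
/- For all real numbers a,b with −1<b≤a<1 and all c∈[0,1], there exists d∈(−1,1) such that (1+ac)/(1+½(a−b)c) ≤ (1+ad)/(1−d) and (1−bc)/(1+½(a−b)c) ≤ (1+bd)/(1+d). -/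
/-- Key lemma: if `d ∈ (−1,1)` satisfies the two linear conditions, both fraction
inequalities hold. -/
theorem aux_two_fraction
    (a b c d : ℝ) (hb : -1 < b) (hba : b ≤ a) (ha : a < 1) (hc0 : 0 ≤ c) (hc1 : c ≤ 1)
    (hd1 : -1 < d) (hd2 : d < 1)
    (h1 : c * (a + b) / 2 ≤ d * (1 + a * (1 + c + (a - b) * c / 2)))
    (h2 : d * (1 - b * (1 + c + (a - b) * c / 2)) ≤ c * (a + b) / 2) :
    (1 + a * c) / (1 + (1 / 2) * (a - b) * c) ≤ (1 + a * d) / (1 - d) ∧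
    (1 - b * c) / (1 + (1 / 2) * (a - b) * c) ≤ (1 + b * d) / (1 + d) := by
  have ht : 0 < 1 + (1 / 2) * (a - b) * c := by nlinarith
  have hdm : 0 < 1 - d := by linarith
  have hdp : 0 < 1 + d := by linarith
  constructor
  · rw [div_le_div_iff₀ ht hdm]
    nlinarith [h1]
  · rw [div_le_div_iff₀ ht hdp]
    nlinarith [h2]

/-- For all `−1 < b ≤ a < 1` and `c ∈ [0,1]` there exists `d ∈ (−1,1)` such that
`(1+ac)/(1+½(a−b)c) ≤ (1+ad)/(1−d)` and `(1−bc)/(1+½(a−b)c) ≤ (1+bd)/(1+d)`. -/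
theorem exists_d_two_fraction_inequalities
    (a b c : ℝ) (hb : -1 < b) (hba : b ≤ a) (ha : a < 1) (hc0 : 0 ≤ c) (hc1 : c ≤ 1) :
    ∃ d : ℝ, -1 < d ∧ d < 1 ∧
      (1 + a * c) / (1 + (1 / 2) * (a - b) * c) ≤ (1 + a * d) / (1 - d) ∧
      (1 - b * c) / (1 + (1 / 2) * (a - b) * c) ≤ (1 + b * d) / (1 + d) := by
  have hs : (0:ℝ) ≤ 1 + c + (a - b) * c / 2 := by nlinarith
  rcases le_or_gt 0 (a + b) with h | h
  · -- case a + b ≥ 0 : then a ≥ 0, take d = N / D1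
    have ha0 : 0 ≤ a := by linarith
    have hN : 0 ≤ c * (a + b) / 2 := by positivity
    have hD : (0:ℝ) < 1 + a * (1 + c + (a - b) * c / 2) := by
      nlinarith [mul_nonneg ha0 hs]
    have hd0 : 0 ≤ c * (a + b) / 2 / (1 + a * (1 + c + (a - b) * c / 2)) :=
      div_nonneg hN hD.le
    have hdlt : c * (a + b) / 2 / (1 + a * (1 + c + (a - b) * c / 2)) < 1 := by
      rw [div_lt_one hD]
      nlinarith [mul_nonneg (sub_nonneg.2 hc1) h, mul_nonneg ha0 hs]
    have he1 : c * (a + b) / 2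
        = c * (a + b) / 2 / (1 + a * (1 + c + (a - b) * c / 2))
          * (1 + a * (1 + c + (a - b) * c / 2)) :=
      (div_mul_cancel₀ _ (ne_of_gt hD)).symm
    refine ⟨_, by linarith, hdlt, ?_⟩
    apply aux_two_fraction a b c _ hb hba ha hc0 hc1 (by linarith) hdlt
    · exact le_of_eq he1
    · nlinarith [he1, mul_nonneg (mul_nonneg hd0 h) hs]
  · -- case a + b < 0 : then b < 0, take d = N / D2
    have hb0 : b < 0 := by linarith
    have hN : c * (a + b) / 2 ≤ 0 := by
      apply div_nonpos_of_nonpos_of_nonneg _ (by norm_num)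
      nlinarith
    have hD : (0:ℝ) < 1 - b * (1 + c + (a - b) * c / 2) := by
      nlinarith [mul_nonneg (neg_nonneg.2 hb0.le) hs]
    have hd0 : c * (a + b) / 2 / (1 - b * (1 + c + (a - b) * c / 2)) ≤ 0 :=
      div_nonpos_of_nonpos_of_nonneg hN hD.le
    have hdgt : -1 < c * (a + b) / 2 / (1 - b * (1 + c + (a - b) * c / 2)) := by
      rw [lt_div_iff₀ hD]
      nlinarith [mul_pos (by linarith : (0:ℝ) < 1 - b)
        (by nlinarith : (0:ℝ) < 1 + (a - b) * c / 2)]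
    have he1 : c * (a + b) / 2
        = c * (a + b) / 2 / (1 - b * (1 + c + (a - b) * c / 2))
          * (1 - b * (1 + c + (a - b) * c / 2)) :=
      (div_mul_cancel₀ _ (ne_of_gt hD)).symm
    refine ⟨_, hdgt, by linarith, ?_⟩
    apply aux_two_fraction a b c _ hb hba ha hc0 hc1 hdgt (by linarith)
    · nlinarith [he1, mul_nonneg (mul_nonneg (neg_nonneg.2 hd0)
        (by linarith : (0:ℝ) ≤ -(a + b))) hs]
    · exact ge_of_eq he1
end

section
/- For all real numbers a,b with −1<b≤a<1, all c∈[0,1], and all θ∈[0,π/2], the infimum over d∈[−1,1] of sin²θ·(1−a)(1−d)/(1+ad) + cos²θ·(1+b)(1+d)/(1+bd) is at most (1+½(a−b)c)·( sin²θ·(1−a)/(1+ac) + cos²θ·(1+b)/(1−bc) ). -/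
open Real

private lemma aux_pos {x e : ℝ} (hx1 : -1 < x) (hx2 : x < 1) (he1 : -1 ≤ e) (he2 : e ≤ 1) :
    0 < 1 + x * e := by
  nlinarith [mul_pos (by linarith : (0:ℝ) < 1 - x) (by linarith : (0:ℝ) < 1 + x),
    mul_nonneg (by linarith : (0:ℝ) ≤ 1 - e) (by linarith : (0:ℝ) ≤ 1 + e),
    sq_nonneg (x + e)]

set_option maxHeartbeats 2000000 in
/-- For all `−1 < b ≤ a < 1`, `c ∈ [0,1]` and `θ ∈ [0,π/2]`, the infimum over `d ∈ [−1,1]` of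
`sin²θ·(1−a)(1−d)/(1+ad) + cos²θ·(1+b)(1+d)/(1+bd)` (the endpoint values being well defined
since `1+ad, 1+bd > 0` wherever the corresponding numerator is nonzero) is at most
`(1+½(a−b)c)·(sin²θ·(1−a)/(1+ac) + cos²θ·(1+b)/(1−bc))`. -/
theorem sInf_mixture_le
    (a b c θ : ℝ) (hb : -1 < b) (hba : b ≤ a) (ha : a < 1)
    (hc0 : 0 ≤ c) (hc1 : c ≤ 1) (hθ0 : 0 ≤ θ) (hθ1 : θ ≤ π / 2) :
    sInf ((fun d : ℝ =>
        sin θ ^ 2 * ((1 - a) * (1 - d) / (1 + a * d))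
          + cos θ ^ 2 * ((1 + b) * (1 + d) / (1 + b * d))) '' Set.Icc (-1) 1)
      ≤ (1 + (1 / 2) * (a - b) * c)
          * (sin θ ^ 2 * ((1 - a) / (1 + a * c)) + cos θ ^ 2 * ((1 + b) / (1 - b * c))) := by
  have ha1 : (-1:ℝ) < a := lt_of_lt_of_le hb hba
  have hb1 : b < 1 := lt_of_le_of_lt hba ha
  have hab : 0 ≤ a - b := by linarith
  have htc : (0:ℝ) ≤ 1 + c + (a - b) * c / 2 := by nlinarith [mul_nonneg hab hc0]
  obtain ⟨M, hM⟩ : ∃ M : ℝ,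
      M = max (1 + a * (1 + c + (a - b) * c / 2)) (1 - b * (1 + c + (a - b) * c / 2)) :=
    ⟨_, rfl⟩
  have hMl : 1 + a * (1 + c + (a - b) * c / 2) ≤ M := hM ▸ le_max_left _ _
  have hMr : 1 - b * (1 + c + (a - b) * c / 2) ≤ M := hM ▸ le_max_right _ _
  have hM1 : 1 ≤ M := by nlinarith [mul_nonneg hab htc]
  have hM0 : (0:ℝ) < 2 * M := by linarith
  obtain ⟨d, hd⟩ : ∃ d : ℝ, d = c * (a + b) / (2 * M) := ⟨_, rfl⟩
  have hdlt : d < 1 := by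
    rw [hd, div_lt_one hM0]
    rcases le_total 0 (a + b) with h | h
    · nlinarith [mul_le_mul_of_nonneg_right hc1 h]
    · nlinarith [mul_nonneg hc0 (neg_nonneg.2 h)]
  have hdgt : -1 < d := by
    rw [hd, lt_div_iff₀ hM0]
    rcases le_total 0 (a + b) with h | h
    · nlinarith [mul_nonneg hc0 h]
    · nlinarith [mul_nonneg (by linarith : (0:ℝ) ≤ 1 - c) (neg_nonneg.2 h)]
  have hpac : 0 < 1 + a * c := aux_pos ha1 ha (by linarith) hc1
  have hpbc : 0 < 1 - b * c := by
    have := aux_pos (x := -b) (e := c) (by linarith) (by linarith) (by linarith) hc1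
    nlinarith [this]
  have hpad : 0 < 1 + a * d := aux_pos ha1 ha hdgt.le hdlt.le
  have hpbd : 0 < 1 + b * d := aux_pos hb hb1 hdgt.le hdlt.le
  -- the two key conditions on d
  have cond1 : c * (a + b) / 2 ≤ d * (1 + a * (1 + c + (a - b) * c / 2)) := by
    rw [hd, div_mul_eq_mul_div, le_div_iff₀ hM0]
    rcases le_total 0 (a + b) with h | h
    · have hle : M ≤ 1 + a * (1 + c + (a - b) * c / 2) := by
        rw [hM]
        apply max_le le_rfl
        nlinarith [mul_nonneg h htc]
      linarith [mul_le_mul_of_nonneg_left hle (mul_nonneg hc0 h)]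
    · have hcab : c * (a + b) ≤ 0 := by nlinarith [mul_nonneg hc0 (neg_nonneg.2 h)]
      linarith [mul_le_mul_of_nonpos_left hMl hcab]
  have cond2 : d * (1 - b * (1 + c + (a - b) * c / 2)) ≤ c * (a + b) / 2 := by
    rw [hd, div_mul_eq_mul_div, div_le_iff₀ hM0]
    rcases le_total 0 (a + b) with h | h
    · linarith [mul_le_mul_of_nonneg_left hMr (mul_nonneg hc0 h)]
    · have hcab : c * (a + b) ≤ 0 := by nlinarith [mul_nonneg hc0 (neg_nonneg.2 h)]
      have hle : M ≤ 1 - b * (1 + c + (a - b) * c / 2) := by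
        rw [hM]
        apply max_le ?_ le_rfl
        nlinarith [mul_nonneg (neg_nonneg.2 h) htc]
      linarith [mul_le_mul_of_nonpos_left hle hcab]
  have h1 : (1 - a) * (1 - d) / (1 + a * d)
      ≤ (1 + (1 / 2) * (a - b) * c) * (1 - a) / (1 + a * c) := by
    rw [div_le_div_iff₀ hpad hpac]
    linarith [mul_nonneg (by linarith : (0:ℝ) ≤ 1 - a) (sub_nonneg.2 cond1)]
  have h2 : (1 + b) * (1 + d) / (1 + b * d)
      ≤ (1 + (1 / 2) * (a - b) * c) * (1 + b) / (1 - b * c) := by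
    rw [div_le_div_iff₀ hpbd hpbc]
    linarith [mul_nonneg (by linarith : (0:ℝ) ≤ 1 + b) (sub_nonneg.2 cond2)]
  have hbdd : BddBelow ((fun d : ℝ =>
      sin θ ^ 2 * ((1 - a) * (1 - d) / (1 + a * d))
        + cos θ ^ 2 * ((1 + b) * (1 + d) / (1 + b * d))) '' Set.Icc (-1) 1) := by
    refine ⟨0, ?_⟩
    rintro x ⟨e, ⟨he1, he2⟩, rfl⟩
    dsimp only
    have p1 : 0 < 1 + a * e := aux_pos ha1 ha he1 he2
    have p2 : 0 < 1 + b * e := aux_pos hb hb1 he1 he2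
    have q1 : 0 ≤ (1 - a) * (1 - e) := mul_nonneg (by linarith) (by linarith)
    have q2 : 0 ≤ (1 + b) * (1 + e) := mul_nonneg (by linarith) (by linarith)
    have r1 := mul_nonneg (sq_nonneg (sin θ)) (div_nonneg q1 p1.le)
    have r2 := mul_nonneg (sq_nonneg (cos θ)) (div_nonneg q2 p2.le)
    linarith
  have hmem : (fun d : ℝ =>
      sin θ ^ 2 * ((1 - a) * (1 - d) / (1 + a * d))
        + cos θ ^ 2 * ((1 + b) * (1 + d) / (1 + b * d))) d
      ∈ ((fun d : ℝ =>
        sin θ ^ 2 * ((1 - a) * (1 - d) / (1 + a * d))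
          + cos θ ^ 2 * ((1 + b) * (1 + d) / (1 + b * d))) '' Set.Icc (-1) 1) :=
    Set.mem_image_of_mem _ ⟨hdgt.le, hdlt.le⟩
  refine (csInf_le hbdd hmem).trans ?_
  dsimp only
  calc sin θ ^ 2 * ((1 - a) * (1 - d) / (1 + a * d))
        + cos θ ^ 2 * ((1 + b) * (1 + d) / (1 + b * d))
      ≤ sin θ ^ 2 * ((1 + (1 / 2) * (a - b) * c) * (1 - a) / (1 + a * c))
        + cos θ ^ 2 * ((1 + (1 / 2) * (a - b) * c) * (1 + b) / (1 - b * c)) :=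
        add_le_add (mul_le_mul_of_nonneg_left h1 (sq_nonneg _))
          (mul_le_mul_of_nonneg_left h2 (sq_nonneg _))
    _ = (1 + (1 / 2) * (a - b) * c)
          * (sin θ ^ 2 * ((1 - a) / (1 + a * c)) + cos θ ^ 2 * ((1 + b) / (1 - b * c))) := by
        field_simp
end

section
/- Let G=(V,E) be a finite graph with coupling constants J:E→[0,∞) and let g̃:V→[0,∞) be a nonnegative external field. Then for any u,v∈V, the map λ ↦ ⟨σ_uσ_v⟩_{λg̃} − ⟨σ_u⟩_{λg̃}⟨σ_v⟩_{λg̃} is nonincreasing on [0,∞). -/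
open Finset

/-!
Differentiating in `λ`, the derivative of `⟨σ_u σ_v⟩ - ⟨σ_u⟩⟨σ_v⟩` at the field `λ g̃` is
`∑_w g̃_w u₃(u, v, w)`, with `u₃` the third Ursell function, so it suffices to prove the
Griffiths–Hurst–Sherman inequality `u₃ ≤ 0` for ferromagnetic couplings and a nonnegative field.

Following Ellis–Monroe–Newman, take four independent replicas, grouped as pairs `(1, 2)` and
`(3, 4)`. The identity `∑ᵢⱼ pᵢ pⱼ (fᵢ - fⱼ)(gᵢ - gⱼ) = 2 (E[fg] - E[f] E[g])`, applied once to the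
pairs and once inside each pair, writes `4 u₃(a, b, c)` as the four-replica expectation of
`(P₁₂ - P₃₄)(C₁₂ - C₃₄)`, where `P = (σ_a - σ'_a)(σ_b - σ'_b)` and `C = σ_c + σ'_c`.
After an orthogonal rotation of the four spins at every site, the four-replica Gibbs weight is
`exp H` with `H` a polynomial with nonnegative coefficients in the rotated spins, the observable
is minus such a polynomial, and every joint moment of the rotated spins at one site is
nonnegative. Expanding the exponential into its power series gives the sign.
-/

open scoped NNReal

section DoubleSum

variable {ι : Type*} [Fintype ι] {p : ι → ℝ}

theorem sum_sum_mul_add (hp : ∑ i, p i = 1) (h : ι → ℝ) :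
    ∑ i, ∑ j, p i * p j * (h i + h j) = 2 * ∑ i, p i * h i := by
  have e : ∀ i j, p i * p j * (h i + h j) = p i * h i * p j + p i * (p j * h j) := by
    intros; ring
  simp only [e, sum_add_distrib, ← mul_sum, ← sum_mul, hp]
  ring

theorem sum_sum_mul_sub_mul_sub (hp : ∑ i, p i = 1) (f g : ι → ℝ) :
    ∑ i, ∑ j, p i * p j * ((f i - f j) * (g i - g j))
      = 2 * (∑ i, p i * (f i * g i) - (∑ i, p i * f i) * ∑ i, p i * g i) := by
  have e : ∀ i j, p i * p j * ((f i - f j) * (g i - g j)) = p i * (f i * g i) * p j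
      + p i * (p j * (f j * g j)) - p i * f i * (p j * g j) - p i * g i * (p j * f j) := by
    intros; ring
  simp only [e, sum_add_distrib, sum_sub_distrib, ← mul_sum, ← sum_mul, hp]
  ring

theorem sum_sum_mul_sub_mul_sub_mul_add (hp : ∑ i, p i = 1) (f g h : ι → ℝ) :
    ∑ i, ∑ j, p i * p j * ((f i - f j) * (g i - g j) * (h i + h j))
      = 2 * (∑ i, p i * (f i * g i * h i) + (∑ i, p i * (f i * g i)) * (∑ i, p i * h i)
        - (∑ i, p i * (f i * h i)) * (∑ i, p i * g i)
        - (∑ i, p i * f i) * ∑ i, p i * (g i * h i)) := by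
  have e : ∀ i j, p i * p j * ((f i - f j) * (g i - g j) * (h i + h j))
      = p i * (f i * g i * h i) * p j + p i * (p j * (f j * g j * h j))
        + p i * (f i * g i) * (p j * h j) + p i * h i * (p j * (f j * g j))
        - p i * (f i * h i) * (p j * g j) - p i * g i * (p j * (f j * h j))
        - p i * f i * (p j * (g j * h j)) - p i * (g i * h i) * (p j * f j) := by
    intros; ring
  simp only [e, sum_add_distrib, sum_sub_distrib, ← mul_sum, ← sum_mul, hp]
  ring

end DoubleSum

theorem sum_arrow_prod {γ α β : Type*} [Fintype γ] [DecidableEq γ] [Fintype α] [Fintype β]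
    (F : (γ → α) → (γ → β) → ℝ) :
    ∑ y : γ → α × β, F (Prod.fst ∘ y) (Prod.snd ∘ y) = ∑ a, ∑ b, F a b := by
  rw [← Fintype.sum_prod_type']
  exact Fintype.sum_equiv (Equiv.arrowProdEquivProdArrow _ _ _) _ _ fun _ => rfl

section PositiveMoments

variable {D ι V : Type*} [Fintype D] [Fintype ι] [Fintype V] [DecidableEq V]

def siteVar (φ : ι → D → ℝ) (ui : V × ι) (x : V → D) : ℝ := φ ui.2 (x ui.1)

variable {φ : ι → D → ℝ}

theorem sum_nonneg_of_mem_adjoin_siteVar (hφ : ∀ k : ι → ℕ, 0 ≤ ∑ d, ∏ i, φ i d ^ k i)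
    {F : (V → D) → ℝ} (hF : F ∈ Algebra.adjoin ℝ≥0 (Set.range (siteVar φ))) :
    0 ≤ ∑ x, F x := by
  rw [← Subalgebra.mem_toSubmodule, Algebra.adjoin_eq_span] at hF
  induction hF using Submodule.span_induction with
  | mem m hm =>
    obtain ⟨k, rfl⟩ := Submonoid.mem_closure_range_iff_of_fintype.1 hm
    simp only [Finset.prod_apply, Pi.pow_apply, siteVar, Fintype.prod_prod_type]
    rw [← Fintype.prod_sum (fun u d => ∏ i, φ i d ^ k (u, i))]
    exact prod_nonneg fun u _ => hφ _
  | zero => simp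
  | add F G _ _ hF hG => simpa only [Pi.add_apply, sum_add_distrib] using add_nonneg hF hG
  | smul c F _ hF =>
    simp only [Pi.smul_apply, NNReal.smul_def, smul_eq_mul, ← mul_sum]
    exact mul_nonneg c.2 hF

theorem sum_exp_mul_nonneg_of_mem_adjoin_siteVar (hφ : ∀ k : ι → ℕ, 0 ≤ ∑ d, ∏ i, φ i d ^ k i)
    {H G : (V → D) → ℝ} (hH : H ∈ Algebra.adjoin ℝ≥0 (Set.range (siteVar φ)))
    (hG : G ∈ Algebra.adjoin ℝ≥0 (Set.range (siteVar φ))) :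
    0 ≤ ∑ x, Real.exp (H x) * G x := by
  have hsum : HasSum (fun n : ℕ => ∑ x, H x ^ n / n.factorial * G x)
      (∑ x, Real.exp (H x) * G x) := by
    refine hasSum_sum fun x _ => ?_
    rw [Real.exp_eq_exp_ℝ]
    exact (NormedSpace.expSeries_div_hasSum_exp (H x)).mul_right (G x)
  refine hsum.nonneg fun n => ?_
  have hmem : (n.factorial : ℝ≥0)⁻¹ • (H ^ n * G) ∈ Algebra.adjoin ℝ≥0 (Set.range (siteVar φ)) :=
    Subalgebra.smul_mem _ (Subalgebra.mul_mem _ (Subalgebra.pow_mem _ hH n) hG) _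
  refine (sum_nonneg_of_mem_adjoin_siteVar hφ hmem).trans_eq (sum_congr rfl fun x _ => ?_)
  simp only [Pi.smul_apply, NNReal.smul_def, NNReal.coe_inv, NNReal.coe_natCast, smul_eq_mul,
    Pi.mul_apply, Pi.pow_apply]
  ring

end PositiveMoments

/-- The Ellis–Monroe–Newman rotation of four replica spins at one site. -/
noncomputable def rotSpin : Fin 4 → (Bool × Bool) × (Bool × Bool) → ℝ
  | 0, ((a, b), (c, d)) => -spinval a + spinval b - spinval c + spinval d
  | 1, ((a, b), (c, d)) => spinval a - spinval b - spinval c + spinval d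
  | 2, ((a, b), (c, d)) => spinval a + spinval b + spinval c + spinval d
  | 3, ((a, b), (c, d)) => spinval a + spinval b - spinval c - spinval d

theorem rotSpin_moment_nonneg (k : Fin 4 → ℕ) :
    0 ≤ ∑ d, ∏ i, rotSpin i d ^ k i := by
  simp only [Fintype.sum_prod_type, Fintype.sum_bool, Fin.prod_univ_four, rotSpin, spinval]
  norm_num
  rcases Nat.even_or_odd (k 0) with h0 | h0 <;> rcases Nat.even_or_odd (k 1) with h1 | h1 <;>
    rcases Nat.even_or_odd (k 2) with h2 | h2 <;> rcases Nat.even_or_odd (k 3) with h3 | h3 <;>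
    simp only [h0.neg_pow, h1.neg_pow, h2.neg_pow, h3.neg_pow] <;> ring_nf <;> positivity

theorem sum_rotSpin_mul_rotSpin (d e : (Bool × Bool) × (Bool × Bool)) :
    ∑ i, rotSpin i d * rotSpin i e = 4 * (spinval d.1.1 * spinval e.1.1
      + spinval d.1.2 * spinval e.1.2 + spinval d.2.1 * spinval e.2.1
      + spinval d.2.2 * spinval e.2.2) := by
  obtain ⟨⟨_, _⟩, ⟨_, _⟩⟩ := d
  obtain ⟨⟨_, _⟩, ⟨_, _⟩⟩ := e
  simp only [Fin.sum_univ_four, rotSpin]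
  ring

section Replicas

variable {V : Type*}

noncomputable def spin (a : V) (σ : V → Bool) : ℝ := spinval (σ a)

noncomputable def pairProd (a b : V) (y : V → Bool × Bool) : ℝ :=
  (spin a (Prod.fst ∘ y) - spin a (Prod.snd ∘ y)) * (spin b (Prod.fst ∘ y) - spin b (Prod.snd ∘ y))

noncomputable def pairSum (c : V) (y : V → Bool × Bool) : ℝ :=
  spin c (Prod.fst ∘ y) + spin c (Prod.snd ∘ y)

theorem pairProd_sub_mul_pairSum_sub (a b c : V) (x : V → (Bool × Bool) × (Bool × Bool)) :
    (pairProd a b (Prod.fst ∘ x) - pairProd a b (Prod.snd ∘ x))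
        * (pairSum c (Prod.fst ∘ x) - pairSum c (Prod.snd ∘ x))
      = -(rotSpin 0 (x a) * rotSpin 1 (x b) * rotSpin 3 (x c)
        + rotSpin 0 (x b) * rotSpin 1 (x a) * rotSpin 3 (x c)) / 2 := by
  simp only [pairProd, pairSum, spin, Function.comp_apply]
  obtain ⟨⟨_, _⟩, ⟨_, _⟩⟩ := x a
  obtain ⟨⟨_, _⟩, ⟨_, _⟩⟩ := x b
  obtain ⟨⟨_, _⟩, ⟨_, _⟩⟩ := x c
  simp only [rotSpin]
  ring

variable [Fintype V]

noncomputable def fourReplicaEnergy (J : V → V → ℝ) (f : V → ℝ)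
    (x : V → (Bool × Bool) × (Bool × Bool)) : ℝ :=
  ∑ u, ∑ v, J u v / 8 * ∑ i, rotSpin i (x u) * rotSpin i (x v) + ∑ u, f u * rotSpin 2 (x u)

theorem fourReplicaEnergy_mem_adjoin {J : V → V → ℝ} {f : V → ℝ} (hJ : ∀ u v, 0 ≤ J u v)
    (hf : ∀ u, 0 ≤ f u) :
    fourReplicaEnergy J f ∈ Algebra.adjoin ℝ≥0 (Set.range (siteVar (V := V) rotSpin)) := by
  set S := Algebra.adjoin ℝ≥0 (Set.range (siteVar (V := V) rotSpin))
  have hvar : ∀ u i, siteVar rotSpin (u, i) ∈ S := fun u i => Algebra.subset_adjoin ⟨(u, i), rfl⟩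
  have hsmul : ∀ {c : ℝ} {F}, 0 ≤ c → F ∈ S → c • F ∈ S := fun hc hF => S.smul_mem hF ⟨_, hc⟩
  have hE : fourReplicaEnergy J f = ∑ u, ∑ v, (J u v / 8) • ∑ i,
      siteVar rotSpin (u, i) * siteVar rotSpin (v, i) + ∑ u, f u • siteVar rotSpin (u, 2) := by
    funext x
    simp [fourReplicaEnergy, Finset.sum_apply, siteVar]
  rw [hE]
  exact add_mem (sum_mem fun u _ => sum_mem fun v _ => hsmul (div_nonneg (hJ u v) (by norm_num))
    (sum_mem fun i _ => mul_mem (hvar u i) (hvar v i))) (sum_mem fun u _ => hsmul (hf u) (hvar u 2))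

end Replicas

section Gibbs

variable {V : Type*} [Fintype V] [DecidableEq V] (J : V → V → ℝ) (f : V → ℝ)

noncomputable def gibbs (σ : V → Bool) : ℝ := isingWeight J f σ / ∑ τ, isingWeight J f τ

theorem sum_isingWeight_pos_s16 : 0 < ∑ σ, isingWeight J f σ :=
  sum_pos (fun _ _ => Real.exp_pos _) univ_nonempty

theorem sum_gibbs : ∑ σ, gibbs J f σ = 1 := by
  simp only [gibbs, ← sum_div, div_self (sum_isingWeight_pos_s16 J f).ne']

theorem isingExp_eq_sum_gibbs (X : (V → Bool) → ℝ) : isingExp J f X = ∑ σ, gibbs J f σ * X σ := by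
  simp only [isingExp, gibbs, sum_div]
  exact sum_congr rfl fun _ _ => by ring

theorem isingExp_sum_smul (c : V → ℝ) (Y : V → (V → Bool) → ℝ) :
    isingExp J f (∑ w, c w • Y w) = ∑ w, c w * isingExp J f (Y w) := by
  simp only [isingExp_eq_sum_gibbs, Finset.sum_apply, Pi.smul_apply, smul_eq_mul, mul_sum]
  rw [sum_comm]
  exact sum_congr rfl fun _ _ => sum_congr rfl fun _ _ => by ring

noncomputable def ursell3 (a b c : V) : ℝ :=
  isingExp J f (spin a * spin b * spin c)
    - isingExp J f (spin a * spin b) * isingExp J f (spin c)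
    - isingExp J f (spin a * spin c) * isingExp J f (spin b)
    - isingExp J f (spin a) * isingExp J f (spin b * spin c)
    + 2 * isingExp J f (spin a) * isingExp J f (spin b) * isingExp J f (spin c)

noncomputable def gibbsPair (y : V → Bool × Bool) : ℝ :=
  gibbs J f (Prod.fst ∘ y) * gibbs J f (Prod.snd ∘ y)

theorem sum_gibbsPair : ∑ y, gibbsPair J f y = 1 := by
  refine (sum_arrow_prod fun σ τ => gibbs J f σ * gibbs J f τ).trans ?_
  rw [← Fintype.sum_mul_sum, sum_gibbs, one_mul]

theorem sum_sum_gibbsPair_eq_ursell3 (a b c : V) :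
    ∑ y, ∑ z, gibbsPair J f y * gibbsPair J f z
        * ((pairProd a b y - pairProd a b z) * (pairSum c y - pairSum c z))
      = 4 * ursell3 J f a b c := by
  have hp := sum_gibbs J f
  have hPC : ∑ y, gibbsPair J f y * (pairProd a b y * pairSum c y)
      = 2 * (∑ σ, gibbs J f σ * (spin a σ * spin b σ * spin c σ)
        + (∑ σ, gibbs J f σ * (spin a σ * spin b σ)) * (∑ σ, gibbs J f σ * spin c σ)
        - (∑ σ, gibbs J f σ * (spin a σ * spin c σ)) * (∑ σ, gibbs J f σ * spin b σ)
        - (∑ σ, gibbs J f σ * spin a σ) * ∑ σ, gibbs J f σ * (spin b σ * spin c σ)) :=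
    (sum_arrow_prod fun σ τ => gibbs J f σ * gibbs J f τ
      * ((spin a σ - spin a τ) * (spin b σ - spin b τ) * (spin c σ + spin c τ))).trans
      (sum_sum_mul_sub_mul_sub_mul_add hp _ _ _)
  have hP : ∑ y, gibbsPair J f y * pairProd a b y
      = 2 * (∑ σ, gibbs J f σ * (spin a σ * spin b σ)
        - (∑ σ, gibbs J f σ * spin a σ) * ∑ σ, gibbs J f σ * spin b σ) :=
    (sum_arrow_prod fun σ τ => gibbs J f σ * gibbs J f τ
      * ((spin a σ - spin a τ) * (spin b σ - spin b τ))).trans (sum_sum_mul_sub_mul_sub hp _ _)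
  have hC : ∑ y, gibbsPair J f y * pairSum c y = 2 * ∑ σ, gibbs J f σ * spin c σ :=
    (sum_arrow_prod fun σ τ => gibbs J f σ * gibbs J f τ * (spin c σ + spin c τ)).trans
      (sum_sum_mul_add hp _)
  rw [sum_sum_mul_sub_mul_sub (sum_gibbsPair J f), hPC, hP, hC]
  simp only [ursell3, isingExp_eq_sum_gibbs, Pi.mul_apply]
  ring

theorem isingWeight_mul_four_replicas (x : V → (Bool × Bool) × (Bool × Bool)) :
    isingWeight J f (Prod.fst ∘ Prod.fst ∘ x) * isingWeight J f (Prod.snd ∘ Prod.fst ∘ x)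
      * (isingWeight J f (Prod.fst ∘ Prod.snd ∘ x) * isingWeight J f (Prod.snd ∘ Prod.snd ∘ x))
      = Real.exp (fourReplicaEnergy J f x) := by
  have hpair : ∀ u v, J u v / 8 * ∑ i, rotSpin i (x u) * rotSpin i (x v)
      = J u v * spinval (x u).1.1 * spinval (x v).1.1 / 2
        + J u v * spinval (x u).1.2 * spinval (x v).1.2 / 2
        + (J u v * spinval (x u).2.1 * spinval (x v).2.1 / 2
        + J u v * spinval (x u).2.2 * spinval (x v).2.2 / 2) := by
    intro u v
    rw [sum_rotSpin_mul_rotSpin]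
    ring
  have hfield : ∀ u, f u * rotSpin 2 (x u) = f u * spinval (x u).1.1 + f u * spinval (x u).1.2
      + (f u * spinval (x u).2.1 + f u * spinval (x u).2.2) := by
    intro u
    simp only [rotSpin]
    ring
  simp only [isingWeight, ← Real.exp_add, fourReplicaEnergy, hpair, hfield, sum_add_distrib,
    sum_div, Function.comp_apply]
  ring_nf

end Gibbs

section GHS

variable {V : Type*} [Fintype V] [DecidableEq V] {J : V → V → ℝ} {f : V → ℝ}

theorem sum_sum_gibbsPair_nonpos (hJ : ∀ u v, 0 ≤ J u v) (hf : ∀ u, 0 ≤ f u) (a b c : V) :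
    ∑ y, ∑ z, gibbsPair J f y * gibbsPair J f z
        * ((pairProd a b y - pairProd a b z) * (pairSum c y - pairSum c z)) ≤ 0 := by
  have hmoment (a b : V) : 0 ≤ ∑ x, Real.exp (fourReplicaEnergy J f x)
      * (rotSpin 0 (x a) * rotSpin 1 (x b) * rotSpin 3 (x c)) :=
    sum_exp_mul_nonneg_of_mem_adjoin_siteVar rotSpin_moment_nonneg
      (fourReplicaEnergy_mem_adjoin hJ hf)
      (mul_mem (mul_mem (Algebra.subset_adjoin ⟨(a, 0), rfl⟩) (Algebra.subset_adjoin ⟨(b, 1), rfl⟩))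
        (Algebra.subset_adjoin ⟨(c, 3), rfl⟩))
  set Z := ∑ σ, isingWeight J f σ
  have hterm : ∀ x : V → (Bool × Bool) × (Bool × Bool),
      gibbsPair J f (Prod.fst ∘ x) * gibbsPair J f (Prod.snd ∘ x)
        * ((pairProd a b (Prod.fst ∘ x) - pairProd a b (Prod.snd ∘ x))
          * (pairSum c (Prod.fst ∘ x) - pairSum c (Prod.snd ∘ x)))
      = -(2 * Z ^ 4)⁻¹ * (Real.exp (fourReplicaEnergy J f x)
          * (rotSpin 0 (x a) * rotSpin 1 (x b) * rotSpin 3 (x c))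
        + Real.exp (fourReplicaEnergy J f x)
          * (rotSpin 0 (x b) * rotSpin 1 (x a) * rotSpin 3 (x c))) := by
    intro x
    rw [pairProd_sub_mul_pairSum_sub, ← isingWeight_mul_four_replicas]
    simp only [gibbsPair, gibbs]
    field_simp
    ring
  rw [← sum_arrow_prod (fun y z => gibbsPair J f y * gibbsPair J f z
      * ((pairProd a b y - pairProd a b z) * (pairSum c y - pairSum c z))),
    sum_congr rfl fun x _ => hterm x, ← mul_sum, sum_add_distrib]
  have hZ : 0 < Z := sum_isingWeight_pos_s16 J f
  exact mul_nonpos_of_nonpos_of_nonneg (by simp only [neg_nonpos]; positivity)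
    (add_nonneg (hmoment a b) (hmoment b a))

/-- The Griffiths–Hurst–Sherman inequality. -/
theorem ursell3_nonpos (hJ : ∀ u v, 0 ≤ J u v) (hf : ∀ u, 0 ≤ f u) (a b c : V) :
    ursell3 J f a b c ≤ 0 := by
  have h := sum_sum_gibbsPair_nonpos hJ hf a b c
  rw [sum_sum_gibbsPair_eq_ursell3] at h
  linarith

end GHS

section Derivative

variable {V : Type*} [Fintype V] [DecidableEq V] (J : V → V → ℝ) (g : V → ℝ)

theorem hasDerivAt_isingWeight_mul (σ : V → Bool) (l : ℝ) :
    HasDerivAt (fun t => isingWeight J (fun x => t * g x) σ)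
      (isingWeight J (fun x => l * g x) σ * (∑ w, g w • spin w) σ) l := by
  have hlin : ∀ t, isingWeight J (fun x => t * g x) σ
      = Real.exp ((∑ u, ∑ v, J u v * spinval (σ u) * spinval (σ v)) / 2
        + t * (∑ w, g w • spin w) σ) := by
    intro t
    simp only [isingWeight, Finset.sum_apply, Pi.smul_apply, smul_eq_mul, spin, mul_sum, mul_assoc]
  simp only [hlin]
  exact (((hasDerivAt_id l).mul_const _).const_add _).exp.congr_deriv (by simp)

theorem hasDerivAt_isingExp_mul (X : (V → Bool) → ℝ) (l : ℝ) :
    HasDerivAt (fun t => isingExp J (fun x => t * g x) X)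
      (isingExp J (fun x => l * g x) (X * ∑ w, g w • spin w)
        - isingExp J (fun x => l * g x) X * isingExp J (fun x => l * g x) (∑ w, g w • spin w))
      l := by
  set B : (V → Bool) → ℝ := ∑ w, g w • spin w
  have hnum := HasDerivAt.fun_sum (u := univ) fun σ _ =>
    (hasDerivAt_isingWeight_mul J g σ l).const_mul (X σ)
  have hden := HasDerivAt.fun_sum (u := univ) fun σ _ => hasDerivAt_isingWeight_mul J g σ l
  have hZ := (sum_isingWeight_pos_s16 J (fun x => l * g x)).ne'
  refine (hnum.div hden hZ).congr_deriv ?_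
  have hXB : ∑ σ, X σ * (isingWeight J (fun x => l * g x) σ * B σ)
      = ∑ σ, (X * B) σ * isingWeight J (fun x => l * g x) σ :=
    sum_congr rfl fun _ _ => by rw [Pi.mul_apply]; ring
  have hB : ∑ σ, isingWeight J (fun x => l * g x) σ * B σ
      = ∑ σ, B σ * isingWeight J (fun x => l * g x) σ :=
    sum_congr rfl fun _ _ => mul_comm _ _
  rw [hXB, hB, isingExp, isingExp, isingExp]
  field_simp

noncomputable def truncatedCorrelation (f : V → ℝ) (u v : V) : ℝ :=
  isingExp J f (spin u * spin v) - isingExp J f (spin u) * isingExp J f (spin v)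

theorem hasDerivAt_truncatedCorrelation (u v : V) (l : ℝ) :
    HasDerivAt (fun t => truncatedCorrelation J (fun x => t * g x) u v)
      (∑ w, g w * ursell3 J (fun x => l * g x) u v w) l := by
  refine ((hasDerivAt_isingExp_mul J g (spin u * spin v) l).sub
    ((hasDerivAt_isingExp_mul J g (spin u) l).mul
      (hasDerivAt_isingExp_mul J g (spin v) l))).congr_deriv ?_
  simp only [mul_sum, mul_smul_comm, isingExp_sum_smul, ursell3, sum_mul, ← sum_sub_distrib,
    ← sum_add_distrib]
  exact sum_congr rfl fun _ _ => by ring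

end Derivative

theorem truncated_correlation_antitone_in_nonneg_field_general
    {V : Type*} [Fintype V] [DecidableEq V]
    (J : V → V → ℝ) (hJnonneg : ∀ u v, 0 ≤ J u v)
    (gt : V → ℝ) (hgt : ∀ x, 0 ≤ gt x) (u v : V) :
    AntitoneOn (fun l : ℝ =>
        isingExp J (fun x => l * gt x) (fun σ => spinval (σ u) * spinval (σ v))
          - isingExp J (fun x => l * gt x) (fun σ => spinval (σ u))
            * isingExp J (fun x => l * gt x) (fun σ => spinval (σ v)))
      (Set.Ici 0) := by
  have hderiv := hasDerivAt_truncatedCorrelation J gt u v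
  refine antitoneOn_of_hasDerivWithinAt_nonpos (convex_Ici 0)
    (fun l _ => (hderiv l).continuousAt.continuousWithinAt) (fun l _ => (hderiv l).hasDerivWithinAt)
    fun l hl => sum_nonpos fun w _ => mul_nonpos_of_nonneg_of_nonpos (hgt w) ?_
  rw [interior_Ici] at hl
  exact ursell3_nonpos hJnonneg (fun x => mul_nonneg hl.le (hgt x)) u v w

/-- **Remark 1.4 (GHS consequence).** For a nonnegative external field `g̃ : V → [0,∞)`, the
truncated correlation `⟨σ_u σ_v⟩_{λg̃} − ⟨σ_u⟩_{λg̃} ⟨σ_v⟩_{λg̃}` is nonincreasing in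
`λ ∈ [0,∞)`. -/
theorem truncated_correlation_antitone_in_nonneg_field
    {V : Type*} [Fintype V] [DecidableEq V]
    (J : V → V → ℝ) (hJsymm : ∀ u v, J u v = J v u) (hJnonneg : ∀ u v, 0 ≤ J u v)
    (gt : V → ℝ) (hgt : ∀ x, 0 ≤ gt x) (u v : V) :
    AntitoneOn (fun l : ℝ =>
        isingExp J (fun x => l * gt x) (fun σ => spinval (σ u) * spinval (σ v))
          - isingExp J (fun x => l * gt x) (fun σ => spinval (σ u))
            * isingExp J (fun x => l * gt x) (fun σ => spinval (σ v)))
      (Set.Ici 0) :=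
  truncated_correlation_antitone_in_nonneg_field_general J hJnonneg gt hgt u v
end
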